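/- Let n ≥ 2. In the braid group B_n, the superselection braid is a palindrome: χ(β_n) = β_n. -/
import Mathlib

namespace Braid

variable {G : Type*} [Group G]

/-- The product in `G` of the braid word `w` (a list of 1-based generator indices). -/
def wordProd (σ : ℕ → G) (w : List ℕ) : G := (w.map σ).prod

/-- `σ 1, …, σ (m-1)` satisfy the defining relations of the Artin braid group `B_m`:
`σ_i σ_{i+1} σ_i = σ_{i+1} σ_i σ_{i+1}` for `1 ≤ i ≤ m-2`, and
`σ_i σ_j = σ_j σ_i` for `|i - j| ≥ 2`, `1 ≤ i, j ≤ m-1`. -/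
def IsBraidRep (m : ℕ) (σ : ℕ → G) : Prop :=
  (∀ i, 1 ≤ i → i + 2 ≤ m → σ i * σ (i + 1) * σ i = σ (i + 1) * σ i * σ (i + 1)) ∧
  (∀ i j, 1 ≤ i → i + 2 ≤ j → j + 1 ≤ m → σ i * σ j = σ j * σ i)

/-- The word `[1, 2, …, j]` representing `b_j = σ_1 σ_2 ⋯ σ_j` (with `b_0 = e`). -/
def bWord (j : ℕ) : List ℕ := List.range' 1 j

/-- The word representing the superselection braid `β_n = b_{n-1} b_{n-2} ⋯ b_1`
(with `β_1 = β_0 = e`). -/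
def betaWord : ℕ → List ℕ
  | 0 => []
  | n + 1 => bWord n ++ betaWord n

/-- The shift `r_a : σ_i ↦ σ_{i+a}` on braid words. -/
def rWord (a : ℕ) (w : List ℕ) : List ℕ := w.map (· + a)

/-- The word representing `t_{k,l} = r_0(χ(b_l)) · r_1(χ(b_l)) ⋯ r_{k-1}(χ(b_l))`,
the braid clockwise exchanging a block of `k` strands with a block of `l` strands. -/
def tWord : ℕ → ℕ → List ℕ
  | 0, _ => []
  | k + 1, l => tWord k l ++ rWord k (bWord l).reverse

lemma wordProd_append (σ : ℕ → G) (u v : List ℕ) :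
    wordProd σ (u ++ v) = wordProd σ u * wordProd σ v := by
  simp [wordProd]

lemma wordProd_nil (σ : ℕ → G) : wordProd σ [] = 1 := rfl

lemma wordProd_cons (σ : ℕ → G) (a : ℕ) (w : List ℕ) :
    wordProd σ (a :: w) = σ a * wordProd σ w := by
  simp [wordProd]

lemma mem_betaWord {k j : ℕ} (hj : j ∈ betaWord k) : 1 ≤ j ∧ j + 1 ≤ k := by
  induction k with
  | zero => simp [betaWord] at hj
  | succ k ih =>
    rw [betaWord, List.mem_append] at hj
    rcases hj with hj | hj
    · rw [bWord, List.mem_range'] at hj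
      omega
    · have := ih hj; omega

lemma sigma_commute_beta {m : ℕ} {σ : ℕ → G} (h : IsBraidRep m σ) (k : ℕ)
    (hk : k + 2 ≤ m) : Commute (σ (k + 1)) (wordProd σ (betaWord k)) := by
  apply Commute.list_prod_right
  intro x hx
  rw [List.mem_map] at hx
  obtain ⟨j, hj, rfl⟩ := hx
  obtain ⟨h1, h2⟩ := mem_betaWord hj
  exact (Commute.eq (h.2 j (k+1) h1 (by omega) (by omega))).symm

lemma key {m : ℕ} {σ : ℕ → G} (h : IsBraidRep m σ) (k : ℕ) (hk : k + 1 ≤ m) :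
    wordProd σ (bWord k ++ betaWord k) =
    wordProd σ (betaWord k ++ (bWord k).reverse) := by
  induction k with
  | zero => rfl
  | succ k ih =>
    have hbw : bWord (k + 1) = bWord k ++ [k + 1] := by
      simp [bWord, List.range'_concat, Nat.add_comm]
    have hcomm := sigma_commute_beta h k hk
    have ihk := ih (by omega)
    rw [wordProd_append, wordProd_append] at ihk
    rw [betaWord, hbw, List.reverse_append, List.reverse_singleton]
    simp only [wordProd_append, List.singleton_append, wordProd_cons, wordProd_nil, mul_one]
    calc wordProd σ (bWord k) * σ (k+1) * (wordProd σ (bWord k) * wordProd σ (betaWord k))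
        = wordProd σ (bWord k) * σ (k+1) *
            (wordProd σ (betaWord k) * wordProd σ (bWord k).reverse) := by rw [ihk]
      _ = wordProd σ (bWord k) * (σ (k+1) * wordProd σ (betaWord k)) *
            wordProd σ (bWord k).reverse := by group
      _ = wordProd σ (bWord k) * (wordProd σ (betaWord k) * σ (k+1)) *
            wordProd σ (bWord k).reverse := by rw [hcomm.eq]
      _ = wordProd σ (bWord k) * wordProd σ (betaWord k) *
            (σ (k+1) * wordProd σ (bWord k).reverse) := by group

/-- Let `n ≥ 2`.  In the braid group `B_n`, the superselection braid is a palindrome: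
`χ(β_n) = β_n`. -/
theorem beta_palindrome (n : ℕ) (hn : 2 ≤ n) (σ : ℕ → G) (h : IsBraidRep n σ) :
    wordProd σ (betaWord n).reverse = wordProd σ (betaWord n) := by
  clear hn
  suffices H : ∀ k, k ≤ n → wordProd σ (betaWord k).reverse = wordProd σ (betaWord k) from
    H n le_rfl
  intro k
  induction k with
  | zero => intro; rfl
  | succ k ih =>
    intro hk
    rw [betaWord, List.reverse_append, wordProd_append, ih (by omega),
      ← wordProd_append, ← key h k hk, wordProd_append, ← wordProd_append]

end Braid
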